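/- arXiv:2202.05501 — 6 statements merged into one kernel-verified Lean document; each statement's English description precedes it below -/
import Mathlib

section
/- Let f : ℝⁿ → ℝ be convex and differentiable, and let X : (0,∞) → ℝⁿ be a twice differentiable solution of the ODE 0 = Ẍ(t) + (3/t)Ẋ(t) + ∇f(X(t)) with X(t) → X₀ and Ẋ(t) → 0 as t → 0⁺. If X⋆ is a minimizer of f with f⋆ = f(X⋆), then for all t > 0, f(X(t)) − f⋆ ≤ 2‖X₀ − X⋆‖²/t². -/
open Filter MeasureTheory
open scoped RealInnerProductSpace Topology

/-!
Along the trajectory, the energy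
`ℰ(t) = t² (f(X t) - f x⋆) + 2 ‖X t + (t/2) Ẋ t - x⋆‖²`
has derivative `2t (f(X t) - f x⋆ - ⟪∇f(X t), X t - x⋆⟫)`, which is `≤ 0` by convexity.
So `ℰ` is nonincreasing on `(0, ∞)`, and its limit at `0⁺` is `2 ‖X₀ - x⋆‖²`; dropping the
nonnegative second term of `ℰ(t)` gives the rate.
-/

theorem AntitoneOn.le_of_tendsto_nhdsGT {β : Type*} [TopologicalSpace β] [Preorder β]
    [OrderClosedTopology β] {φ : ℝ → β} {a : ℝ} {L : β} (hφ : AntitoneOn φ (Set.Ioi a))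
    (hlim : Tendsto φ (𝓝[>] a) (𝓝 L)) {t : ℝ} (ht : a < t) : φ t ≤ L := by
  refine ge_of_tendsto hlim ?_
  filter_upwards [Ioo_mem_nhdsGT ht] with s hs
  exact hφ hs.1 (Set.mem_Ioi.mpr ht) hs.2.le

section AGM

variable {E : Type*} [NormedAddCommGroup E] [InnerProductSpace ℝ E]

theorem HasGradientAt.comp_hasDerivAt [CompleteSpace E] {f : E → ℝ} {v : E} {X : ℝ → E}
    {X' : E} {t : ℝ} (hf : HasGradientAt f v (X t)) (hX : HasDerivAt X X' t) :
    HasDerivAt (fun s => f (X s)) ⟪v, X'⟫ t := by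
  simpa [InnerProductSpace.toDual_apply_apply, Function.comp_def] using
    hf.hasFDerivAt.comp_hasDerivAt t hX

noncomputable def agmEnergy (f : E → ℝ) (X X' : ℝ → E) (xs : E) (t : ℝ) : ℝ :=
  t ^ 2 * (f (X t) - f xs) + 2 * ‖X t + (t / 2) • X' t - xs‖ ^ 2

variable {f : E → ℝ} {X X' X'' : ℝ → E} {xs v : E} {t : ℝ}

theorem hasDerivAt_agm_shift (ht : t ≠ 0) (hX' : HasDerivAt X (X' t) t)
    (hX'' : HasDerivAt X' (X'' t) t) (hODE : X'' t + (3 / t) • X' t + v = 0) :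
    HasDerivAt (fun s => X s + (s / 2) • X' s - xs) (-(t / 2) • v) t := by
  have hv : v = -(X'' t + (3 / t) • X' t) := eq_neg_of_add_eq_zero_right hODE
  refine ((hX'.add (((hasDerivAt_id' t).div_const 2).smul hX'')).sub_const xs).congr_deriv ?_
  rw [hv]
  match_scalars <;> field_simp; ring

theorem hasDerivAt_agmEnergy [CompleteSpace E] (ht : t ≠ 0) (hf : HasGradientAt f v (X t))
    (hX' : HasDerivAt X (X' t) t) (hX'' : HasDerivAt X' (X'' t) t)
    (hODE : X'' t + (3 / t) • X' t + v = 0) :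
    HasDerivAt (agmEnergy f X X' xs) (2 * t * (f (X t) - f xs - ⟪v, X t - xs⟫)) t := by
  have hpot := (hasDerivAt_pow 2 t).mul ((hf.comp_hasDerivAt hX').sub_const (f xs))
  have hkin := ((hasDerivAt_agm_shift (xs := xs) ht hX' hX'' hODE).norm_sq).const_mul 2
  refine (hpot.add hkin).congr_deriv ?_
  have hsplit : X t + (t / 2) • X' t - xs = (X t - xs) + (t / 2) • X' t := by abel
  rw [hsplit, inner_smul_right, inner_add_left, real_inner_smul_left,
    real_inner_comm v (X t - xs), real_inner_comm v (X' t)]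
  push_cast
  ring

theorem agmEnergy_deriv_nonpos (ht : 0 < t) (hconv : 0 ≤ f xs - f (X t) - ⟪v, xs - X t⟫) :
    2 * t * (f (X t) - f xs - ⟪v, X t - xs⟫) ≤ 0 := by
  rw [← neg_sub (X t) xs, inner_neg_right] at hconv
  exact mul_nonpos_of_nonneg_of_nonpos (by positivity) (by linarith)

theorem antitoneOn_agmEnergy [CompleteSpace E] {g : E → E}
    (hgrad : ∀ x, HasGradientAt f (g x) x)
    (hconv : ∀ x y, 0 ≤ f x - f y - ⟪g y, x - y⟫)
    (hX' : ∀ t ∈ Set.Ioi (0:ℝ), HasDerivAt X (X' t) t)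
    (hX'' : ∀ t ∈ Set.Ioi (0:ℝ), HasDerivAt X' (X'' t) t)
    (hODE : ∀ t ∈ Set.Ioi (0:ℝ), X'' t + (3 / t) • X' t + g (X t) = 0) :
    AntitoneOn (agmEnergy f X X' xs) (Set.Ioi 0) := by
  have hderiv : ∀ t ∈ Set.Ioi (0:ℝ), HasDerivAt (agmEnergy f X X' xs)
      (2 * t * (f (X t) - f xs - ⟪g (X t), X t - xs⟫)) t := fun t ht =>
    hasDerivAt_agmEnergy (ne_of_gt ht) (hgrad _) (hX' t ht) (hX'' t ht) (hODE t ht)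
  refine antitoneOn_of_hasDerivWithinAt_nonpos (convex_Ioi 0)
    (fun t ht => (hderiv t ht).continuousAt.continuousWithinAt)
    (fun t ht => (hderiv t (interior_subset ht)).hasDerivWithinAt) ?_
  rw [interior_Ioi]
  exact fun t ht => agmEnergy_deriv_nonpos ht (hconv xs (X t))

theorem tendsto_agmEnergy_nhdsGT_zero {X₀ : E} (hf : ContinuousAt f X₀)
    (hX0 : Tendsto X (𝓝[>] 0) (𝓝 X₀)) (hXd0 : Tendsto X' (𝓝[>] 0) (𝓝 0)) :
    Tendsto (agmEnergy f X X' xs) (𝓝[>] 0) (𝓝 (2 * ‖X₀ - xs‖ ^ 2)) := by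
  have hid : Tendsto (fun s : ℝ => s) (𝓝[>] 0) (𝓝 0) := nhdsWithin_le_nhds
  have hpot := (hid.pow 2).mul ((hf.tendsto.comp hX0).sub_const (f xs))
  have hkin := (((hX0.add ((hid.div_const 2).smul hXd0)).sub_const xs).norm.pow 2).const_mul 2
  have h := hpot.add hkin
  norm_num at h
  exact h

end AGM

theorem agm_ode_rate_r3_general
    {E : Type*} [NormedAddCommGroup E] [InnerProductSpace ℝ E] [CompleteSpace E]
    (f : E → ℝ) (g : E → E)
    (hgrad : ∀ x, HasGradientAt f (g x) x)
    (hconv : ∀ x y, 0 ≤ f x - f y - ⟪g y, x - y⟫)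
    (X X' X'' : ℝ → E)
    (hX' : ∀ t ∈ Set.Ioi (0:ℝ), HasDerivAt X (X' t) t)
    (hX'' : ∀ t ∈ Set.Ioi (0:ℝ), HasDerivAt X' (X'' t) t)
    (hODE : ∀ t ∈ Set.Ioi (0:ℝ), X'' t + (3 / t) • X' t + g (X t) = 0)
    (X₀ : E) (hX0 : Tendsto X (𝓝[>] (0:ℝ)) (𝓝 X₀))
    (hXd0 : Tendsto X' (𝓝[>] (0:ℝ)) (𝓝 0))
    (Xs : E) :
    ∀ t > (0:ℝ), f (X t) - f Xs ≤ 2 * ‖X₀ - Xs‖ ^ 2 / t ^ 2 := by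
  intro t ht
  have hdecay : agmEnergy f X X' Xs t ≤ 2 * ‖X₀ - Xs‖ ^ 2 :=
    (antitoneOn_agmEnergy hgrad hconv hX' hX'' hODE).le_of_tendsto_nhdsGT
      (tendsto_agmEnergy_nhdsGT_zero (hgrad X₀).continuousAt hX0 hXd0) ht
  have hkin : 0 ≤ 2 * ‖X t + (t / 2) • X' t - Xs‖ ^ 2 := by positivity
  rw [le_div_iff₀ (by positivity), mul_comm]
  unfold agmEnergy at hdecay
  linarith

theorem agm_ode_rate_r3
    {E : Type*} [NormedAddCommGroup E] [InnerProductSpace ℝ E] [CompleteSpace E]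
    (f : E → ℝ) (g : E → E)
    (hgrad : ∀ x, HasGradientAt f (g x) x)
    (hconv : ∀ x y, 0 ≤ f x - f y - ⟪g y, x - y⟫)
    (X X' X'' : ℝ → E)
    (hX' : ∀ t ∈ Set.Ioi (0:ℝ), HasDerivAt X (X' t) t)
    (hX'' : ∀ t ∈ Set.Ioi (0:ℝ), HasDerivAt X' (X'' t) t)
    (hODE : ∀ t ∈ Set.Ioi (0:ℝ), X'' t + (3 / t) • X' t + g (X t) = 0)
    (X₀ : E) (hX0 : Tendsto X (𝓝[>] (0:ℝ)) (𝓝 X₀))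
    (hXd0 : Tendsto X' (𝓝[>] (0:ℝ)) (𝓝 0))
    (Xs : E) (hmin : ∀ x, f Xs ≤ f x) :
    ∀ t > (0:ℝ), f (X t) - f Xs ≤ 2 * ‖X₀ - Xs‖ ^ 2 / t ^ 2 :=
  agm_ode_rate_r3_general f g hgrad hconv X X' X'' hX' hX'' hODE X₀ hX0 hXd0 Xs
end

section
/- Let f : ℝⁿ → ℝ be μ-strongly convex and differentiable with minimizer X⋆, and let X solve 0 = Ẍ + 2√μ Ẋ + ∇f(X) with X(0) = X₀, Ẋ(0) = 0. Define E(t) = e^{√μ t}( f(X(t)) − f⋆ + (1/2)‖Ẋ(t) + √μ(X(t) − X⋆)‖² ) − (μ/2)‖X₀ − X⋆‖² + ∫₀ᵗ (√μ/2) e^{√μ s}‖Ẋ(s)‖² ds + ∫₀ᵗ √μ e^{√μ s}( f⋆ − f(X(s)) − ⟨∇f(X(s)), X⋆ − X(s)⟩ − (μ/2)‖X(s) − X⋆‖² ) ds. Then E(t) = f(X₀) − f⋆ for all t ≥ 0. -/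
/-!
Along the damped flow the Lyapunov function `e^{√μ t} (f(X) - f⋆ + ½‖Ẋ + √μ (X - X⋆)‖²)` has
derivative exactly minus the sum of the two integrands (substitute `Ẍ = -2√μ Ẋ - ∇f(X)` and
expand), so the identity is the fundamental theorem of calculus. Integrability of the second
integrand comes for free: strong convexity makes it nonnegative, and a nonnegative derivative is
automatically integrable.
-/

open MeasureTheory
open scoped RealInnerProductSpace

namespace intervalIntegral

theorem integral_add_eq_sub_of_hasDerivAt_neg {Φ p q : ℝ → ℝ} {a b : ℝ}
    (hΦ : ∀ s ∈ Set.uIcc a b, HasDerivAt Φ (-(p s + q s)) s)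
    (hp : IntervalIntegrable p volume a b)
    (hpq : ∀ s ∈ Set.uIcc a b, 0 ≤ p s + q s) :
    (∫ s in a..b, p s) + (∫ s in a..b, q s) = Φ a - Φ b := by
  have hsum : IntervalIntegrable (fun s => p s + q s) volume a b := by
    refine intervalIntegrable_deriv_of_nonneg (g := fun s => -Φ s)
      (HasDerivAt.continuousOn fun s hs => (hΦ s hs).neg) (fun s hs => ?_) (fun s hs => ?_)
    · exact (hΦ s (Set.Ioo_subset_Icc_self hs)).neg.congr_deriv (neg_neg _)
    · exact hpq s (Set.Ioo_subset_Icc_self hs)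
  have hq : IntervalIntegrable q volume a b := by
    simpa using hsum.sub hp
  rw [← integral_add hp hq, ← neg_sub, ← integral_eq_sub_of_hasDerivAt hΦ hsum.neg,
    integral_neg, neg_neg]

end intervalIntegral

section DampedGradientFlow

variable {E : Type*} [NormedAddCommGroup E] [InnerProductSpace ℝ E]

noncomputable def dampedLyapunov (f : E → ℝ) (X X' : ℝ → E) (a : ℝ) (xs : E) (t : ℝ) : ℝ :=
  Real.exp (a * t) * (f (X t) - f xs + 1 / 2 * ‖X' t + a • (X t - xs)‖ ^ 2)

theorem dampedLyapunov_zero {f : E → ℝ} {X X' : ℝ → E} {a μ : ℝ} {xs : E}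
    (hX' : X' 0 = 0) (ha : a ^ 2 = μ) :
    dampedLyapunov f X X' a xs 0 = f (X 0) - f xs + μ / 2 * ‖X 0 - xs‖ ^ 2 := by
  rw [dampedLyapunov, hX', zero_add, norm_smul, mul_pow, Real.norm_eq_abs, sq_abs, ha,
    mul_zero, Real.exp_zero]
  ring

variable [CompleteSpace E]

theorem hasDerivAt_dampedLyapunov {f : E → ℝ} {g : E → E} {X X' X'' : ℝ → E} {a μ s : ℝ}
    {xs : E} (hf : HasGradientAt f (g (X s)) (X s)) (hX : HasDerivAt X (X' s) s)
    (hX' : HasDerivAt X' (X'' s) s) (hode : X'' s + (2 * a) • X' s + g (X s) = 0)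
    (ha : a ^ 2 = μ) :
    HasDerivAt (dampedLyapunov f X X' a xs)
      (-(a / 2 * Real.exp (a * s) * ‖X' s‖ ^ 2
        + a * Real.exp (a * s)
          * (f xs - f (X s) - ⟪g (X s), xs - X s⟫ - μ / 2 * ‖X s - xs‖ ^ 2))) s := by
  have hfX : HasDerivAt (fun u => f (X u)) ⟪g (X s), X' s⟫ s := by
    have := hf.hasFDerivAt.comp_hasDerivAt s hX
    simp only [InnerProductSpace.toDual_apply_apply] at this
    exact this
  have hV : HasDerivAt (fun u => X' u + a • (X u - xs)) (X'' s + a • X' s) s :=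
    hX'.add ((hX.sub_const xs).const_smul a)
  have hexp : HasDerivAt (fun u => Real.exp (a * u)) (Real.exp (a * s) * a) s := by
    simpa using ((hasDerivAt_id s).const_mul a).exp
  refine (hexp.mul ((hfX.sub_const (f xs)).add (hV.norm_sq.const_mul (1 / 2)))).congr_deriv ?_
  have hX''s : X'' s = -(2 * a) • X' s - g (X s) := by
    rw [← sub_eq_zero, ← hode]
    module
  rw [hX''s, ← ha]
  simp only [Pi.add_apply, ← real_inner_self_eq_norm_sq, inner_add_left, inner_add_right,
    inner_sub_left, inner_sub_right, real_inner_smul_right, real_inner_comm]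
  ring

end DampedGradientFlow

theorem sc_agm_ode_conservation_law_general
    {E : Type*} [NormedAddCommGroup E] [InnerProductSpace ℝ E] [CompleteSpace E]
    (f : E → ℝ) (g : E → E)
    (hgrad : ∀ x, HasGradientAt f (g x) x)
    (μ : ℝ) (hμ : 0 < μ)
    (hsc : ∀ x y, f x + ⟪g x, y - x⟫ + (μ / 2) * ‖y - x‖ ^ 2 ≤ f y)
    (X X' X'' : ℝ → E)
    (hX' : ∀ t ∈ Set.Ici (0:ℝ), HasDerivAt X (X' t) t)
    (hX'' : ∀ t ∈ Set.Ici (0:ℝ), HasDerivAt X' (X'' t) t)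
    (hODE : ∀ t ∈ Set.Ici (0:ℝ),
      X'' t + (2 * Real.sqrt μ) • X' t + g (X t) = 0)
    (X₀ : E) (hX0 : X 0 = X₀) (hXd0 : X' 0 = 0)
    (Xs : E) :
    ∀ t ≥ (0:ℝ),
      Real.exp (Real.sqrt μ * t)
          * (f (X t) - f Xs
            + (1 / 2) * ‖X' t + Real.sqrt μ • (X t - Xs)‖ ^ 2)
        - (μ / 2) * ‖X₀ - Xs‖ ^ 2
        + (∫ s in (0:ℝ)..t,
            (Real.sqrt μ / 2) * Real.exp (Real.sqrt μ * s) * ‖X' s‖ ^ 2)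
        + (∫ s in (0:ℝ)..t,
            Real.sqrt μ * Real.exp (Real.sqrt μ * s)
              * (f Xs - f (X s) - ⟪g (X s), Xs - X s⟫
                - (μ / 2) * ‖X s - Xs‖ ^ 2))
      = f X₀ - f Xs := by
  intro t ht
  have ha : Real.sqrt μ ^ 2 = μ := Real.sq_sqrt hμ.le
  have hmem : ∀ s ∈ Set.uIcc 0 t, s ∈ Set.Ici (0:ℝ) := fun s hs =>
    (Set.uIcc_of_le ht ▸ hs).1
  have hgap : ∀ x, 0 ≤ f Xs - f x - ⟪g x, Xs - x⟫ - μ / 2 * ‖x - Xs‖ ^ 2 := fun x => by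
    rw [norm_sub_rev]
    linarith [hsc x Xs]
  have hcX' : ContinuousOn X' (Set.uIcc 0 t) := fun s hs =>
    (hX'' s (hmem s hs)).continuousAt.continuousWithinAt
  have hbalance := intervalIntegral.integral_add_eq_sub_of_hasDerivAt_neg
    (fun s hs => hasDerivAt_dampedLyapunov (xs := Xs) (hgrad (X s)) (hX' s (hmem s hs))
      (hX'' s (hmem s hs)) (hODE s (hmem s hs)) ha)
    (ContinuousOn.intervalIntegrable (by fun_prop))
    (fun s _ => add_nonneg (by positivity) (mul_nonneg (by positivity) (hgap (X s))))
  rw [dampedLyapunov_zero hXd0 ha, hX0, dampedLyapunov] at hbalance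
  linarith

theorem sc_agm_ode_conservation_law
    {E : Type*} [NormedAddCommGroup E] [InnerProductSpace ℝ E] [CompleteSpace E]
    (f : E → ℝ) (g : E → E)
    (hgrad : ∀ x, HasGradientAt f (g x) x)
    (μ : ℝ) (hμ : 0 < μ)
    (hsc : ∀ x y, f x + ⟪g x, y - x⟫ + (μ / 2) * ‖y - x‖ ^ 2 ≤ f y)
    (X X' X'' : ℝ → E)
    (hX' : ∀ t ∈ Set.Ici (0:ℝ), HasDerivAt X (X' t) t)
    (hX'' : ∀ t ∈ Set.Ici (0:ℝ), HasDerivAt X' (X'' t) t)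
    (hODE : ∀ t ∈ Set.Ici (0:ℝ),
      X'' t + (2 * Real.sqrt μ) • X' t + g (X t) = 0)
    (X₀ : E) (hX0 : X 0 = X₀) (hXd0 : X' 0 = 0)
    (Xs : E) (hmin : ∀ x, f Xs ≤ f x) :
    ∀ t ≥ (0:ℝ),
      Real.exp (Real.sqrt μ * t)
          * (f (X t) - f Xs
            + (1 / 2) * ‖X' t + Real.sqrt μ • (X t - Xs)‖ ^ 2)
        - (μ / 2) * ‖X₀ - Xs‖ ^ 2
        + (∫ s in (0:ℝ)..t,
            (Real.sqrt μ / 2) * Real.exp (Real.sqrt μ * s) * ‖X' s‖ ^ 2)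
        + (∫ s in (0:ℝ)..t,
            Real.sqrt μ * Real.exp (Real.sqrt μ * s)
              * (f Xs - f (X s) - ⟪g (X s), Xs - X s⟫
                - (μ / 2) * ‖X s - Xs‖ ^ 2))
      = f X₀ - f Xs :=
  sc_agm_ode_conservation_law_general f g hgrad μ hμ hsc X X' X'' hX' hX'' hODE X₀ hX0 hXd0 Xs
end

section
/- Let f : ℝⁿ → ℝ be convex and differentiable with inf f > −∞, T > 0, and let X : [0,T] → ℝⁿ be a C² solution of 0 = Ẍ − (3/(t−T))Ẋ + 2∇f(X) on [0,T) with X(0) = X₀, Ẋ(0) = 0, extended continuously so that Ẋ(T) = 0 and lim_{t→T⁻} Ẋ(t)/(t−T) = ∇f(X(T)). Then ‖∇f(X(T))‖² ≤ 4( f(X₀) − f(X(T)) )/T² ≤ 4( f(X₀) − f⋆ )/T². -/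
/-!
Along the ODE, the energy
`W t = ‖Ẋ‖² / (4 (t - T)²) + (f X - f X_T) / (t - T)² - ⟪Ẋ, X - X_T⟫ / (t - T)³`
satisfies `W' = -2 (t - T)⁻³ (f X - f X_T - ⟪∇f X, X - X_T⟫)`, which is `≤ 0` by convexity,
so `W t ≤ W 0 = (f X₀ - f X_T) / T²`. Convexity at `X_T` gives
`W t ≥ ‖V‖² / 4 + ⟪∇f X_T - V, X - X_T⟫ / (t - T)²` with `V = Ẋ / (t - T) → ∇f X_T`.
Since `Ẋ = O(t - T)`, the mean value inequality gives `X - X_T = O((t - T)²)`, so the cross term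
vanishes as `t → T⁻` and the lower bound tends to `‖∇f X_T‖² / 4`.
-/

open Filter MeasureTheory
open scoped RealInnerProductSpace Topology

section

open Set Asymptotics

variable {E : Type*} [NormedAddCommGroup E] [InnerProductSpace ℝ E]

noncomputable def ogmgLyapunov (f : E → ℝ) (T : ℝ) (X X' : ℝ → E) (t : ℝ) : ℝ :=
  ‖X' t‖ ^ 2 / (4 * (t - T) ^ 2) + (f (X t) - f (X T)) / (t - T) ^ 2
    - ⟪X' t, X t - X T⟫ / (t - T) ^ 3

noncomputable def ogmgLowerBound (T : ℝ) (X X' : ℝ → E) (v : E) (t : ℝ) : ℝ :=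
  ‖(t - T)⁻¹ • X' t‖ ^ 2 / 4 + ⟪v - (t - T)⁻¹ • X' t, X t - X T⟫ / (t - T) ^ 2

theorem hasDerivAt_ogmgLyapunov [CompleteSpace E] {f : E → ℝ} {g : E → E} {X X' X'' : ℝ → E}
    {T t : ℝ} (ht : t ≠ T) (hf : HasGradientAt f (g (X t)) (X t))
    (hX : HasDerivAt X (X' t) t) (hX' : HasDerivAt X' (X'' t) t)
    (hODE : X'' t - (3 / (t - T)) • X' t + (2:ℝ) • g (X t) = 0) :
    HasDerivAt (ogmgLyapunov f T X X')
      (-2 / (t - T) ^ 3 * (f (X t) - f (X T) - ⟪g (X t), X t - X T⟫)) t := by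
  have hs : t - T ≠ 0 := sub_ne_zero.2 ht
  have hX'' : X'' t = (3 / (t - T)) • X' t - (2:ℝ) • g (X t) := by
    rwa [sub_add, sub_eq_zero] at hODE
  have hfX : HasDerivAt (fun r => f (X r)) ⟪g (X t), X' t⟫ t := by
    simpa [Function.comp_def] using hf.hasFDerivAt.comp_hasDerivAt t hX
  have hpow (n : ℕ) := ((hasDerivAt_id' t).sub_const T).fun_pow n
  have hW := ((hX'.norm_sq.div ((hpow 2).const_mul 4) (by positivity)).add
    ((hfX.sub_const (f (X T))).div (hpow 2) (by positivity))).sub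
    ((hX'.inner ℝ (hX.sub_const (X T))).div (hpow 3) (by positivity))
  refine hW.congr_deriv ?_
  rw [hX'']
  simp only [inner_sub_right, inner_sub_left, real_inner_smul_left, real_inner_smul_right,
    real_inner_self_eq_norm_sq, real_inner_comm (X' t) (g (X t))]
  field_simp
  ring

theorem antitoneOn_ogmgLyapunov [CompleteSpace E] {f : E → ℝ} {g : E → E} {X X' X'' : ℝ → E}
    {a T : ℝ} (hgrad : ∀ x, HasGradientAt f (g x) x)
    (hconv : ∀ x y, 0 ≤ f x - f y - ⟪g y, x - y⟫)
    (hX' : ∀ t ∈ Ico a T, HasDerivAt X (X' t) t) (hX'' : ∀ t ∈ Ico a T, HasDerivAt X' (X'' t) t)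
    (hODE : ∀ t ∈ Ico a T, X'' t - (3 / (t - T)) • X' t + (2:ℝ) • g (X t) = 0) :
    AntitoneOn (ogmgLyapunov f T X X') (Ico a T) := by
  have hW : ∀ t ∈ Ico a T, HasDerivAt (ogmgLyapunov f T X X')
      (-2 / (t - T) ^ 3 * (f (X t) - f (X T) - ⟪g (X t), X t - X T⟫)) t := fun t ht =>
    hasDerivAt_ogmgLyapunov ht.2.ne (hgrad _) (hX' t ht) (hX'' t ht) (hODE t ht)
  refine antitoneOn_of_hasDerivWithinAt_nonpos (convex_Ico a T)
    (fun t ht => (hW t ht).continuousAt.continuousWithinAt)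
    (fun t ht => (hW t (interior_subset ht)).hasDerivWithinAt) fun t ht => ?_
  have ht' : t < T := (interior_subset ht : t ∈ Ico a T).2
  have hfactor : 0 ≤ -2 / (t - T) ^ 3 :=
    div_nonneg_of_nonpos (by norm_num) (Odd.pow_nonpos (by decide) (sub_nonpos.2 ht'.le))
  have hgap : f (X t) - f (X T) - ⟪g (X t), X t - X T⟫ ≤ 0 := by
    have h := hconv (X T) (X t)
    rw [← neg_sub (X t) (X T), inner_neg_right] at h
    linarith
  exact mul_nonpos_of_nonneg_of_nonpos hfactor hgap

theorem ogmgLowerBound_le_ogmgLyapunov {f : E → ℝ} {X X' : ℝ → E} {T t : ℝ} {v : E}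
    (hconv : 0 ≤ f (X t) - f (X T) - ⟪v, X t - X T⟫) :
    ogmgLowerBound T X X' v t ≤ ogmgLyapunov f T X X' t := by
  have hdiff : ogmgLyapunov f T X X' t - ogmgLowerBound T X X' v t =
      (f (X t) - f (X T) - ⟪v, X t - X T⟫) / (t - T) ^ 2 := by
    rw [ogmgLyapunov, ogmgLowerBound, norm_smul, inner_sub_left, real_inner_smul_left,
      Real.norm_eq_abs, mul_pow, sq_abs]
    generalize t - T = s
    ring
  have hgap := div_nonneg hconv (sq_nonneg (t - T))
  linarith

theorem tendsto_inner_div_of_tendsto_zero_of_isBigO {α : Type*} {l : Filter α} {a u : α → E}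
    {φ : α → ℝ} (ha : Tendsto a l (𝓝 0)) (hu : u =O[l] φ) :
    Tendsto (fun x => ⟪a x, u x⟫ / φ x) l (𝓝 0) := by
  have hinner : (fun x => ⟪a x, u x⟫) =O[l] fun x => ‖a x‖ * ‖u x‖ :=
    .of_bound 1 (.of_forall fun x => by simpa using abs_real_inner_le_norm (a x) (u x))
  have ha' : (fun x => ‖a x‖) =o[l] fun _ => (1 : ℝ) :=
    (isLittleO_one_iff ℝ).2 (by simpa using ha.norm)
  simpa using (hinner.trans_isLittleO (ha'.mul_isBigO hu.norm_left)).tendsto_div_nhds_zero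

theorem isBigO_sub_of_tendsto_inv_sub_smul {X' : ℝ → E} {T : ℝ} {v : E}
    (h : Tendsto (fun t => (t - T)⁻¹ • X' t) (𝓝[<] T) (𝓝 v)) :
    X' =O[𝓝[<] T] fun t => t - T := by
  have hsmul := (isBigO_refl (fun t => t - T) (𝓝[<] T)).smul (h.isBigO_one ℝ)
  refine (hsmul.congr' ?_ (.of_forall fun t => mul_one _)).trans (isBigO_refl _ _)
  filter_upwards [self_mem_nhdsWithin] with t ht
  rw [smul_smul, mul_inv_cancel₀ (sub_ne_zero.2 (ne_of_lt ht)), one_smul]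

theorem isBigO_sub_sq_of_isBigO_deriv {X X' : ℝ → E} {a T : ℝ} (haT : a < T)
    (hXc : ContinuousOn X (Icc a T)) (hX' : ∀ t ∈ Ico a T, HasDerivAt X (X' t) t)
    (hX'O : X' =O[𝓝[<] T] fun t => t - T) :
    (fun t => X t - X T) =O[𝓝[<] T] fun t => (t - T) ^ 2 := by
  obtain ⟨C, hC, hCX'⟩ := hX'O.exists_nonneg
  obtain ⟨l, hl, hlX'⟩ := mem_nhdsLT_iff_exists_Ioo_subset.1 hCX'.bound
  refine .of_bound C ?_
  filter_upwards [Ioo_mem_nhdsLT (max_lt hl haT)] with t ht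
  have hat : a ≤ t := (le_max_right _ _).trans ht.1.le
  have hbound : ∀ r ∈ Ico t T, ‖X' r‖ ≤ C * (T - t) := fun r hr => by
    have hr' : ‖X' r‖ ≤ C * ‖r - T‖ := hlX' ⟨(le_max_left _ _).trans_lt (ht.1.trans_le hr.1), hr.2⟩
    rw [Real.norm_of_nonpos (sub_nonpos.2 hr.2.le)] at hr'
    nlinarith [hr.1]
  have hmvt := norm_image_sub_le_of_norm_deriv_right_le_segment (hXc.mono (Icc_subset_Icc_left hat))
    (fun r hr => (hX' r ⟨hat.trans hr.1, hr.2⟩).hasDerivWithinAt) hbound T ⟨ht.2.le, le_rfl⟩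
  rw [norm_sub_rev, Real.norm_of_nonneg (sq_nonneg _)]
  nlinarith

theorem tendsto_ogmgLowerBound {X X' : ℝ → E} {T : ℝ} {v : E}
    (hV : Tendsto (fun t => (t - T)⁻¹ • X' t) (𝓝[<] T) (𝓝 v))
    (hX : (fun t => X t - X T) =O[𝓝[<] T] fun t => (t - T) ^ 2) :
    Tendsto (ogmgLowerBound T X X' v) (𝓝[<] T) (𝓝 (‖v‖ ^ 2 / 4)) := by
  have hcross := tendsto_inner_div_of_tendsto_zero_of_isBigO
    (by simpa using (tendsto_const_nhds (x := v)).sub hV) hX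
  have hsum := ((hV.norm.pow 2).div_const 4).add hcross
  rw [add_zero] at hsum
  exact hsum

end

theorem ogmg_ode_gradient_rate_general
    {E : Type*} [NormedAddCommGroup E] [InnerProductSpace ℝ E] [CompleteSpace E]
    (f : E → ℝ) (g : E → E)
    (hgrad : ∀ x, HasGradientAt f (g x) x)
    (hconv : ∀ x y, 0 ≤ f x - f y - ⟪g y, x - y⟫)
    (fstar : ℝ) (hfstar : ∀ x, fstar ≤ f x)
    (T : ℝ) (hT : 0 < T)
    (X X' X'' : ℝ → E)
    (hX' : ∀ t ∈ Set.Ico (0:ℝ) T, HasDerivAt X (X' t) t)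
    (hX'' : ∀ t ∈ Set.Ico (0:ℝ) T, HasDerivAt X' (X'' t) t)
    (hXc : ContinuousOn X (Set.Icc 0 T))
    (hODE : ∀ t ∈ Set.Ico (0:ℝ) T,
      X'' t - (3 / (t - T)) • X' t + (2:ℝ) • g (X t) = 0)
    (X₀ : E) (hX0 : X 0 = X₀) (hXd0 : X' 0 = 0)
    (hXdlim : Tendsto (fun t => (t - T)⁻¹ • X' t) (𝓝[<] T) (𝓝 (g (X T)))) :
    ‖g (X T)‖ ^ 2 ≤ 4 * (f X₀ - f (X T)) / T ^ 2 ∧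
      4 * (f X₀ - f (X T)) / T ^ 2 ≤ 4 * (f X₀ - fstar) / T ^ 2 := by
  have hXO := isBigO_sub_sq_of_isBigO_deriv hT hXc hX' (isBigO_sub_of_tendsto_inv_sub_smul hXdlim)
  have hW := antitoneOn_ogmgLyapunov hgrad hconv hX' hX'' hODE
  have hW0 : ogmgLyapunov f T X X' 0 = (f X₀ - f (X T)) / T ^ 2 := by
    simp [ogmgLyapunov, hX0, hXd0]
  have hkey : ‖g (X T)‖ ^ 2 / 4 ≤ (f X₀ - f (X T)) / T ^ 2 := by
    refine le_of_tendsto (tendsto_ogmgLowerBound hXdlim hXO) ?_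
    filter_upwards [Ico_mem_nhdsLT hT] with t ht
    rw [← hW0]
    exact (ogmgLowerBound_le_ogmgLyapunov (hconv _ _)).trans (hW ⟨le_rfl, hT⟩ ht ht.1)
  refine ⟨?_, by gcongr; exact hfstar _⟩
  rw [mul_div_assoc]
  linarith

theorem ogmg_ode_gradient_rate
    {E : Type*} [NormedAddCommGroup E] [InnerProductSpace ℝ E] [CompleteSpace E]
    (f : E → ℝ) (g : E → E)
    (hgrad : ∀ x, HasGradientAt f (g x) x)
    (hconv : ∀ x y, 0 ≤ f x - f y - ⟪g y, x - y⟫)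
    (fstar : ℝ) (hfstar : ∀ x, fstar ≤ f x)
    (T : ℝ) (hT : 0 < T)
    (X X' X'' : ℝ → E)
    (hX' : ∀ t ∈ Set.Ico (0:ℝ) T, HasDerivAt X (X' t) t)
    (hX'' : ∀ t ∈ Set.Ico (0:ℝ) T, HasDerivAt X' (X'' t) t)
    (hXc : ContinuousOn X (Set.Icc 0 T))
    (hODE : ∀ t ∈ Set.Ico (0:ℝ) T,
      X'' t - (3 / (t - T)) • X' t + (2:ℝ) • g (X t) = 0)
    (X₀ : E) (hX0 : X 0 = X₀) (hXd0 : X' 0 = 0)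
    (hXdT : Tendsto X' (𝓝[<] T) (𝓝 0))
    (hXdlim : Tendsto (fun t => (t - T)⁻¹ • X' t) (𝓝[<] T) (𝓝 (g (X T)))) :
    ‖g (X T)‖ ^ 2 ≤ 4 * (f X₀ - f (X T)) / T ^ 2 ∧
      4 * (f X₀ - f (X T)) / T ^ 2 ≤ 4 * (f X₀ - fstar) / T ^ 2 :=
  ogmg_ode_gradient_rate_general f g hgrad hconv fstar hfstar T hT X X' X'' hX' hX'' hXc hODE X₀ hX0
    hXd0 hXdlim
end

section
/- Let f : ℝⁿ → ℝ be convex and differentiable, T > 0, r ≤ 0, with f⋆ = inf f > −∞. Let X : [0,T) → ℝⁿ be C² solving 0 = Ẍ + (r/(t−T))Ẋ + 2∇f(X), X(0) = X₀, Ẋ(0) = 0. Then the function Ψ(t) = (1/2)‖Ẋ(t)‖² + 2( f(X(t)) − f(X₀) ) is nonincreasing on [0,T), Ψ(t) ≤ 0 for all t, and consequently sup_{t∈[0,T)} ‖Ẋ(t)‖ ≤ 2√(f(X₀) − f⋆). -/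
/-!
Along a solution, `Ψ(t) = ½‖Ẋ‖² + 2 (f(X) - f(X₀))` satisfies `Ψ̇ = (r/(T - t)) ‖Ẋ‖² ≤ 0`:
the gradient term of the ODE cancels the derivative of `2 f(X)`, leaving only the damping
term. Hence `Ψ` is antitone on `[0, T)` and `Ψ ≤ Ψ(0) = 0` because `Ẋ(0) = 0`. Together with
`f(X(t)) ≥ f⋆` this gives `‖Ẋ(t)‖² ≤ 4 (f(X₀) - f⋆)`.
-/

open scoped RealInnerProductSpace

section

variable {E : Type*} [NormedAddCommGroup E] [InnerProductSpace ℝ E] [CompleteSpace E]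

theorem HasGradientAt.hasDerivAt_comp {f : E → ℝ} {g : E} {γ : ℝ → E} {γ' : E} {t : ℝ}
    (hf : HasGradientAt f g (γ t)) (hγ : HasDerivAt γ γ' t) :
    HasDerivAt (fun s => f (γ s)) ⟪g, γ'⟫ t := by
  have h := hf.hasFDerivAt.comp_hasDerivAt t hγ
  simp only [InnerProductSpace.toDual_apply_apply] at h
  exact h

theorem hasDerivAt_energy_of_damped_gradient_system {f : E → ℝ} {X V : ℝ → E} {A g : E}
    {a c t : ℝ} (hX : HasDerivAt X (V t) t) (hV : HasDerivAt V A t)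
    (hf : HasGradientAt f g (X t)) (hode : A + a • V t + c • g = 0) (b : ℝ) :
    HasDerivAt (fun s => 1 / 2 * ‖V s‖ ^ 2 + c * (f (X s) - b)) (-a * ‖V t‖ ^ 2) t := by
  have hA : A = -(a • V t) - c • g := by
    linear_combination (norm := module) hode
  refine ((hV.norm_sq.const_mul (1 / 2)).add
    (((hf.hasDerivAt_comp hX).sub_const b).const_mul c)).congr_deriv ?_
  simp only [hA, inner_sub_right, inner_neg_right, inner_smul_right, real_inner_self_eq_norm_sq,
    real_inner_comm g]
  ring

end

theorem le_two_mul_sqrt_of_energy_nonpos {u x y m : ℝ}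
    (henergy : 1 / 2 * u ^ 2 + 2 * (x - y) ≤ 0) (hm : m ≤ x) : u ≤ 2 * √(y - m) := by
  have : u / 2 ≤ √(y - m) := Real.le_sqrt_of_sq_le (by linarith)
  linarith

theorem ogmg_ode_velocity_bounded_general
    {E : Type*} [NormedAddCommGroup E] [InnerProductSpace ℝ E] [CompleteSpace E]
    (f : E → ℝ) (g : E → E)
    (hgrad : ∀ x, HasGradientAt f (g x) x)
    (fstar : ℝ) (hfstar : ∀ x, fstar ≤ f x)
    (T : ℝ) (r : ℝ) (hr : r ≤ 0)
    (X X' X'' : ℝ → E)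
    (hX' : ∀ t ∈ Set.Ico (0:ℝ) T, HasDerivAt X (X' t) t)
    (hX'' : ∀ t ∈ Set.Ico (0:ℝ) T, HasDerivAt X' (X'' t) t)
    (hODE : ∀ t ∈ Set.Ico (0:ℝ) T,
      X'' t + (r / (t - T)) • X' t + (2:ℝ) • g (X t) = 0)
    (X₀ : E) (hX0 : X 0 = X₀) (hXd0 : X' 0 = 0) :
    AntitoneOn (fun t => (1 / 2) * ‖X' t‖ ^ 2 + 2 * (f (X t) - f X₀))
        (Set.Ico 0 T)
      ∧ (∀ t ∈ Set.Ico (0:ℝ) T,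
          (1 / 2) * ‖X' t‖ ^ 2 + 2 * (f (X t) - f X₀) ≤ 0)
      ∧ (∀ t ∈ Set.Ico (0:ℝ) T,
          ‖X' t‖ ≤ 2 * Real.sqrt (f X₀ - fstar)) := by
  set Ψ : ℝ → ℝ := fun t => (1 / 2) * ‖X' t‖ ^ 2 + 2 * (f (X t) - f X₀)
  have hΨ : ∀ t ∈ Set.Ico (0:ℝ) T, HasDerivAt Ψ (-(r / (t - T)) * ‖X' t‖ ^ 2) t := fun t ht =>
    hasDerivAt_energy_of_damped_gradient_system (hX' t ht) (hX'' t ht) (hgrad _) (hODE t ht) _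
  have hanti : AntitoneOn Ψ (Set.Ico 0 T) := by
    refine antitoneOn_of_hasDerivWithinAt_nonpos (f' := fun t => -(r / (t - T)) * ‖X' t‖ ^ 2)
      (convex_Ico 0 T)
      (fun t ht => (hΨ t ht).continuousAt.continuousWithinAt) (fun t ht => ?_) (fun t ht => ?_)
      <;> rw [interior_Ico] at ht
    · exact (hΨ t (Set.Ioo_subset_Ico_self ht)).hasDerivWithinAt
    · have hdamp : 0 ≤ r / (t - T) := div_nonneg_of_nonpos hr (sub_nonpos.mpr ht.2.le)
      exact mul_nonpos_of_nonpos_of_nonneg (neg_nonpos.mpr hdamp) (sq_nonneg _)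
  have hΨ_nonpos : ∀ t ∈ Set.Ico (0:ℝ) T, Ψ t ≤ 0 := fun t ht => by
    simpa [Ψ, hX0, hXd0] using hanti ⟨le_rfl, ht.1.trans_lt ht.2⟩ ht ht.1
  exact ⟨hanti, hΨ_nonpos, fun t ht =>
    le_two_mul_sqrt_of_energy_nonpos (hΨ_nonpos t ht) (hfstar (X t))⟩

theorem ogmg_ode_velocity_bounded
    {E : Type*} [NormedAddCommGroup E] [InnerProductSpace ℝ E] [CompleteSpace E]
    (f : E → ℝ) (g : E → E)
    (hgrad : ∀ x, HasGradientAt f (g x) x)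
    (hconv : ∀ x y, 0 ≤ f x - f y - ⟪g y, x - y⟫)
    (fstar : ℝ) (hfstar : ∀ x, fstar ≤ f x)
    (T : ℝ) (hT : 0 < T) (r : ℝ) (hr : r ≤ 0)
    (X X' X'' : ℝ → E)
    (hX' : ∀ t ∈ Set.Ico (0:ℝ) T, HasDerivAt X (X' t) t)
    (hX'' : ∀ t ∈ Set.Ico (0:ℝ) T, HasDerivAt X' (X'' t) t)
    (hODE : ∀ t ∈ Set.Ico (0:ℝ) T,
      X'' t + (r / (t - T)) • X' t + (2:ℝ) • g (X t) = 0)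
    (X₀ : E) (hX0 : X 0 = X₀) (hXd0 : X' 0 = 0) :
    AntitoneOn (fun t => (1 / 2) * ‖X' t‖ ^ 2 + 2 * (f (X t) - f X₀))
        (Set.Ico 0 T)
      ∧ (∀ t ∈ Set.Ico (0:ℝ) T,
          (1 / 2) * ‖X' t‖ ^ 2 + 2 * (f (X t) - f X₀) ≤ 0)
      ∧ (∀ t ∈ Set.Ico (0:ℝ) T,
          ‖X' t‖ ≤ 2 * Real.sqrt (f X₀ - fstar)) :=
  ogmg_ode_velocity_bounded_general f g hgrad fstar hfstar T r hr X X' X'' hX' hX'' hODE X₀ hX0 hXd0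
end

section
/- Let f : ℝⁿ → ℝ be convex and differentiable, T > 0, r < 0, and let X : [0,T) → ℝⁿ solve 0 = Ẍ + (r/(t−T))Ẋ + 2∇f(X) with X(0) = X₀, Ẋ(0) = 0 and sup_{t∈[0,T)}‖Ẋ(t)‖ < ∞. Then X is Lipschitz on [0,T), extends continuously to [0,T], and lim_{t→T⁻} Ẋ(t) = 0. -/
open Filter Set
open scoped RealInnerProductSpace Topology

/-!
A bounded velocity makes `X` Lipschitz, hence Cauchy at `T⁻`, so `X` converges in the complete
space `E`. Along the flow the energy `‖Ẋ‖² + 4 f(X)` has derivative `2r/(T - t) ‖Ẋ‖² ≤ 0`, and it is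
bounded below near `T` because `f(X t) → f(X_T)`; so it converges, and with it `‖Ẋ‖² → c ≥ 0`.
If `c > 0`, the energy derivative would eventually be at most `rc/(2(T - t))`, whose integral
diverges logarithmically at `T`, driving the energy to `-∞`.
-/

theorem UniformContinuousOn.exists_tendsto_nhdsLT {E : Type*} [UniformSpace E] [CompleteSpace E]
    {f : ℝ → E} {a b : ℝ} (hab : a < b) (hf : UniformContinuousOn f (Ico a b)) :
    ∃ L, Tendsto f (𝓝[<] b) (𝓝 L) := by
  rw [← cauchy_map_iff_exists_tendsto, ← nhdsWithin_Ico_eq_nhdsLT hab]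
  have : (𝓝[Ico a b] b).NeBot := by rw [nhdsWithin_Ico_eq_nhdsLT hab]; infer_instance
  exact (cauchy_nhds.mono nhdsWithin_le_nhds).map_of_le hf inf_le_right

theorem antitoneOn_Ico_of_hasDerivAt_nonpos {φ φ' : ℝ → ℝ} {a b : ℝ}
    (hφ : ∀ t ∈ Ico a b, HasDerivAt φ (φ' t) t) (hφ' : ∀ t ∈ Ioo a b, φ' t ≤ 0) :
    AntitoneOn φ (Ico a b) :=
  antitoneOn_of_hasDerivWithinAt_nonpos (convex_Ico a b)
    (fun t ht => (hφ t ht).continuousAt.continuousWithinAt)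
    (fun t ht => (hφ t (interior_subset ht)).hasDerivWithinAt)
    (fun t ht => hφ' t (by rwa [interior_Ico] at ht))

theorem AntitoneOn.exists_tendsto_nhdsLT {φ : ℝ → ℝ} {a b : ℝ} (hab : a < b)
    (hφ : AntitoneOn φ (Ico a b)) (hbdd : IsBoundedUnder (· ≥ ·) (𝓝[<] b) φ) :
    ∃ L, Tendsto φ (𝓝[<] b) (𝓝 L) := by
  obtain ⟨m, hm⟩ := hbdd
  obtain ⟨c, hcb, hc⟩ := mem_nhdsLT_iff_exists_Ico_subset.1 (eventually_map.1 hm)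
  have hne : (Ioo (max a c) b).Nonempty := nonempty_Ioo.2 (max_lt hab hcb)
  exact ⟨_, (hφ.mono (Ioo_subset_Ico_self.trans (Ico_subset_Ico_left (le_max_left a c))))
    |>.tendsto_nhdsWithin_Ioo_left hne ⟨m, forall_mem_image.2 fun t ht =>
      hc ⟨(le_max_right a c).trans ht.1.le, ht.2⟩⟩⟩

theorem tendsto_sub_nhdsLT_nhdsGT_zero (b : ℝ) : Tendsto (b - ·) (𝓝[<] b) (𝓝[>] 0) :=
  tendsto_nhdsWithin_iff.2
    ⟨((continuous_sub_left b).tendsto' b 0 (sub_self b)).mono_left nhdsWithin_le_nhds,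
      eventually_nhdsWithin_of_forall fun _ ht => sub_pos.2 (mem_Iio.1 ht)⟩

theorem tendsto_atBot_of_hasDerivAt_le_neg_div {φ φ' : ℝ → ℝ} {a b k : ℝ} (hab : a < b)
    (hk : 0 < k) (hφ : ∀ t ∈ Ico a b, HasDerivAt φ (φ' t) t)
    (hle : ∀ t ∈ Ico a b, φ' t ≤ -k / (b - t)) :
    Tendsto φ (𝓝[<] b) atBot := by
  -- `φ t - k log (b - t)` is antitone, while `k log (b - t) → -∞`.
  set ψ := fun t => φ t - k * Real.log (b - t)
  have hψ' : ∀ t ∈ Ico a b, HasDerivAt ψ (φ' t + k / (b - t)) t := by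
    intro t ht
    have hlog := ((hasDerivAt_id t).const_sub b).log (sub_pos.2 ht.2).ne'
    exact ((hφ t ht).sub (hlog.const_mul k)).congr_deriv (by simp only [id]; ring)
  have hψ : AntitoneOn ψ (Ico a b) := antitoneOn_Ico_of_hasDerivAt_nonpos hψ' fun t ht => by
    have := hle t (Ioo_subset_Ico_self ht)
    rw [neg_div] at this
    linarith
  have hlog : Tendsto (fun t => ψ a + k * Real.log (b - t)) (𝓝[<] b) atBot :=
    tendsto_atBot_add_const_left _ _
      ((Real.tendsto_log_nhdsGT_zero.comp (tendsto_sub_nhdsLT_nhdsGT_zero b)).const_mul_atBot hk)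
  refine tendsto_atBot_mono' _ ?_ hlog
  filter_upwards [Ioo_mem_nhdsLT hab] with t ht
  have := hψ (left_mem_Ico.2 hab) (Ioo_subset_Ico_self ht) ht.1.le
  simp only [ψ] at this
  linarith

theorem eq_zero_of_tendsto_of_hasDerivAt_div_mul {φ q : ℝ → ℝ} {a b ρ L c : ℝ} (hab : a < b)
    (hρ : ρ < 0) (hφ : ∀ t ∈ Ico a b, HasDerivAt φ (ρ / (b - t) * q t) t)
    (hφL : Tendsto φ (𝓝[<] b) (𝓝 L)) (hq : Tendsto q (𝓝[<] b) (𝓝 c)) (hq0 : ∀ t, 0 ≤ q t) :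
    c = 0 := by
  refine le_antisymm (not_lt.1 fun hc => ?_) (ge_of_tendsto' hq hq0)
  obtain ⟨a', ha'b, ha'⟩ := mem_nhdsLT_iff_exists_Ico_subset.1
    (hq.eventually (lt_mem_nhds (half_lt_self hc)))
  refine not_tendsto_atBot_of_tendsto_nhds hφL <|
    tendsto_atBot_of_hasDerivAt_le_neg_div (max_lt hab ha'b) (k := -ρ * (c / 2))
      (by nlinarith) (fun t ht => hφ t ⟨(le_max_left a a').trans ht.1, ht.2⟩) fun t ht => ?_
  have hbt : 0 < b - t := sub_pos.2 ht.2
  have hqt : c / 2 < q t := ha' ⟨(le_max_right a a').trans ht.1, ht.2⟩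
  rw [neg_mul, neg_div, ← neg_div, neg_neg, div_mul_eq_mul_div]
  exact div_le_div_of_nonneg_right (by nlinarith) hbt.le

theorem hasDerivAt_energy {E : Type*} [NormedAddCommGroup E] [InnerProductSpace ℝ E]
    [CompleteSpace E] {f : E → ℝ} {g : E → E} {X X' X'' : ℝ → E} {r T t : ℝ}
    (hgrad : HasGradientAt f (g (X t)) (X t)) (hX : HasDerivAt X (X' t) t)
    (hX' : HasDerivAt X' (X'' t) t)
    (hODE : X'' t + (r / (t - T)) • X' t + (2:ℝ) • g (X t) = 0) :
    HasDerivAt (fun s => ‖X' s‖ ^ 2 + 4 * f (X s)) (2 * r / (T - t) * ‖X' t‖ ^ 2) t := by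
  have hfX : HasDerivAt (fun s => f (X s)) ⟪g (X t), X' t⟫ t := by
    simpa [Function.comp_def] using hgrad.hasFDerivAt.comp_hasDerivAt t hX
  have hX'' : X'' t = -((r / (t - T)) • X' t + (2:ℝ) • g (X t)) :=
    eq_neg_of_add_eq_zero_left (by rw [← add_assoc, hODE])
  refine (hX'.norm_sq.add (hfX.const_mul 4)).congr_deriv ?_
  rw [hX'', inner_neg_right, inner_add_right, real_inner_smul_right, real_inner_smul_right,
    real_inner_self_eq_norm_sq, real_inner_comm, show t - T = -(T - t) by ring, div_neg]
  ring

theorem ogmg_ode_extension_general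
    {E : Type*} [NormedAddCommGroup E] [InnerProductSpace ℝ E] [CompleteSpace E]
    (f : E → ℝ) (g : E → E)
    (hgrad : ∀ x, HasGradientAt f (g x) x)
    (T : ℝ) (hT : 0 < T) (r : ℝ) (hr : r < 0)
    (X X' X'' : ℝ → E)
    (hX' : ∀ t ∈ Set.Ico (0:ℝ) T, HasDerivAt X (X' t) t)
    (hX'' : ∀ t ∈ Set.Ico (0:ℝ) T, HasDerivAt X' (X'' t) t)
    (hODE : ∀ t ∈ Set.Ico (0:ℝ) T,
      X'' t + (r / (t - T)) • X' t + (2:ℝ) • g (X t) = 0)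
    (M : ℝ) (hM : ∀ t ∈ Set.Ico (0:ℝ) T, ‖X' t‖ ≤ M) :
    (∃ C ≥ (0:ℝ), ∀ s ∈ Set.Ico (0:ℝ) T, ∀ t ∈ Set.Ico (0:ℝ) T,
        ‖X s - X t‖ ≤ C * |s - t|)
      ∧ (∃ XT : E, Tendsto X (𝓝[<] T) (𝓝 XT))
      ∧ Tendsto X' (𝓝[<] T) (𝓝 0) := by
  have hM0 : 0 ≤ M := (norm_nonneg _).trans (hM 0 ⟨le_rfl, hT⟩)
  have hlip : ∀ s ∈ Ico 0 T, ∀ t ∈ Ico 0 T, ‖X s - X t‖ ≤ M * |s - t| := fun s hs t ht => by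
    simpa [Real.norm_eq_abs] using (convex_Ico 0 T).norm_image_sub_le_of_norm_hasDerivWithin_le
      (fun x hx => (hX' x hx).hasDerivWithinAt) hM ht hs
  obtain ⟨XT, hXT⟩ := (LipschitzOnWith.of_dist_le' (f := X) (K := M)
    (by simpa only [dist_eq_norm, Real.norm_eq_abs] using hlip)).uniformContinuousOn
    |>.exists_tendsto_nhdsLT hT
  refine ⟨⟨M, hM0, hlip⟩, ⟨XT, hXT⟩, ?_⟩
  set φ := fun t => ‖X' t‖ ^ 2 + 4 * f (X t)
  have hφ : ∀ t ∈ Ico 0 T, HasDerivAt φ (2 * r / (T - t) * ‖X' t‖ ^ 2) t := fun t ht =>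
    hasDerivAt_energy (hgrad _) (hX' t ht) (hX'' t ht) (hODE t ht)
  have hφ_anti : AntitoneOn φ (Ico 0 T) := antitoneOn_Ico_of_hasDerivAt_nonpos hφ fun t ht =>
    mul_nonpos_of_nonpos_of_nonneg (div_nonpos_of_nonpos_of_nonneg (by linarith)
      (sub_pos.2 ht.2).le) (by positivity)
  have hfX : Tendsto (fun t => 4 * f (X t)) (𝓝[<] T) (𝓝 (4 * f XT)) :=
    ((hgrad XT).continuousAt.tendsto.comp hXT).const_mul 4
  obtain ⟨L, hL⟩ := hφ_anti.exists_tendsto_nhdsLT hT <| hfX.isBoundedUnder_ge.mono_ge <|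
    Eventually.of_forall fun t => le_add_of_nonneg_left (by positivity)
  have hv : Tendsto (fun t => ‖X' t‖ ^ 2) (𝓝[<] T) (𝓝 (L - 4 * f XT)) := by
    simpa [φ] using hL.sub hfX
  have hv0 := eq_zero_of_tendsto_of_hasDerivAt_div_mul hT (by linarith) hφ hL hv
    fun t => by positivity
  rw [hv0] at hv
  exact tendsto_zero_iff_norm_tendsto_zero.2 (by simpa using hv.sqrt)

theorem ogmg_ode_extension
    {E : Type*} [NormedAddCommGroup E] [InnerProductSpace ℝ E] [CompleteSpace E]
    (f : E → ℝ) (g : E → E)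
    (hgrad : ∀ x, HasGradientAt f (g x) x)
    (hconv : ∀ x y, 0 ≤ f x - f y - ⟪g y, x - y⟫)
    (T : ℝ) (hT : 0 < T) (r : ℝ) (hr : r < 0)
    (X X' X'' : ℝ → E)
    (hX' : ∀ t ∈ Set.Ico (0:ℝ) T, HasDerivAt X (X' t) t)
    (hX'' : ∀ t ∈ Set.Ico (0:ℝ) T, HasDerivAt X' (X'' t) t)
    (hODE : ∀ t ∈ Set.Ico (0:ℝ) T,
      X'' t + (r / (t - T)) • X' t + (2:ℝ) • g (X t) = 0)
    (X₀ : E) (hX0 : X 0 = X₀) (hXd0 : X' 0 = 0)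
    (M : ℝ) (hM : ∀ t ∈ Set.Ico (0:ℝ) T, ‖X' t‖ ≤ M) :
    (∃ C ≥ (0:ℝ), ∀ s ∈ Set.Ico (0:ℝ) T, ∀ t ∈ Set.Ico (0:ℝ) T,
        ‖X s - X t‖ ≤ C * |s - t|)
      ∧ (∃ XT : E, Tendsto X (𝓝[<] T) (𝓝 XT))
      ∧ Tendsto X' (𝓝[<] T) (𝓝 0) :=
  ogmg_ode_extension_general f g hgrad T hT r hr X X' X'' hX' hX'' hODE M hM
end

section
/- Under the setup of the semi-second-order symplectic Euler method (f convex, L-smooth, s ∈ (0, 2/L], θ_k = k/2, c_k = θ_{k+1}/(θ_{k+1}² − θ_k²), updates x_k⁺ = x_k − (s/2)∇f(x_k), z_{k+1} = z_k − sθ_k∇f(x_k), x_{k+1} = (θ_k²/θ_{k+1}²)x_k⁺ + (1 − θ_k²/θ_{k+1}²)z_{k+1}), the Lyapunov sequence Φ_k = 2c_kθ_k²( f(x_k) − f⋆ − (s/4)‖∇f(x_k)‖² ) + (1/s)‖z_{k+1} − X⋆‖² is nonincreasing: Φ_{k+1} ≤ Φ_k for all k ≥ 0. -/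
open Filter
open scoped RealInnerProductSpace

/-!
Cocoercivity of the gradient of a convex `L`-smooth function, weakened to the constant
`s / 4 ≤ 1 / (2L)`, bounds `⟪∇f(x_{k+1}), x_{k+1} - X⋆⟫` and `⟪∇f(x_{k+1}), x_{k+1} - x_k⟫` from
below. The `x`-update is a convex combination of `x_k⁺` and `z_{k+1}`, so it expresses
`θ_{k+1} ⟪∇f(x_{k+1}), z_{k+1} - X⋆⟫` through exactly these two inner products; expanding
`‖z_{k+2} - X⋆‖²` then writes `Φ_{k+1} - Φ_k` as minus two cocoercivity gaps plus multiples of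
`f(x_{k+1}) - f⋆ ≥ 0` and `‖∇f(x_{k+1})‖²` whose coefficients are nonpositive because
`c_{k+1} ≥ 1` and `c_k θ_k² - c_{k+1} θ_{k+1}² + θ_{k+1} ≥ 0`.
-/

section Gradient

variable {E : Type*} [NormedAddCommGroup E] [InnerProductSpace ℝ E] [CompleteSpace E]
  {f : E → ℝ} {g : E → E} {L : ℝ}

theorem IsLocalMin.hasGradientAt_eq_zero {a g' : E} (h : IsLocalMin f a)
    (hf : HasGradientAt f g' a) : g' = 0 :=
  (InnerProductSpace.toDual ℝ E).map_eq_zero_iff.mp (h.hasFDerivAt_eq_zero hf.hasFDerivAt)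

theorem le_add_inner_add_sq_of_lipschitz_gradient (hgrad : ∀ x, HasGradientAt f (g x) x)
    (hsmooth : ∀ x y, ‖g x - g y‖ ≤ L * ‖x - y‖) (x y : E) :
    f y ≤ f x + ⟪g x, y - x⟫ + L / 2 * ‖y - x‖ ^ 2 := by
  set d := y - x
  set ψ : ℝ → ℝ := fun t => f (x + t • d) - t * ⟪g x, d⟫ - L / 2 * t ^ 2 * ‖d‖ ^ 2
  have hψ' (t : ℝ) : HasDerivAt ψ (⟪g (x + t • d) - g x, d⟫ - L * t * ‖d‖ ^ 2) t := by
    have hline : HasDerivAt (fun t : ℝ => x + t • d) d t := by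
      simpa using ((hasDerivAt_id t).smul_const d).const_add x
    have hf := (hgrad (x + t • d)).hasFDerivAt.comp_hasDerivAt t hline
    have hq := ((hasDerivAt_pow 2 t).const_mul (L / 2)).mul_const (‖d‖ ^ 2)
    refine ((hf.sub (hasDerivAt_mul_const ⟪g x, d⟫)).sub hq).congr_deriv ?_
    simp only [InnerProductSpace.toDual_apply_apply, inner_sub_left]
    ring
  have hψ'_nonpos (t : ℝ) (ht : 0 ≤ t) : ⟪g (x + t • d) - g x, d⟫ - L * t * ‖d‖ ^ 2 ≤ 0 := by
    have := calc ⟪g (x + t • d) - g x, d⟫ ≤ ‖g (x + t • d) - g x‖ * ‖d‖ := real_inner_le_norm _ _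
      _ ≤ L * ‖t • d‖ * ‖d‖ := by gcongr; simpa using hsmooth (x + t • d) x
      _ = L * t * ‖d‖ ^ 2 := by rw [norm_smul, Real.norm_of_nonneg ht]; ring
    linarith
  have hanti : AntitoneOn ψ (Set.Ici 0) :=
    antitoneOn_of_hasDerivWithinAt_nonpos (convex_Ici 0)
      (fun t _ => (hψ' t).continuousAt.continuousWithinAt)
      (fun t _ => (hψ' t).hasDerivWithinAt)
      (fun t ht => hψ'_nonpos t (interior_subset ht))
  have h01 := hanti Set.self_mem_Ici (Set.mem_Ici.mpr zero_le_one) zero_le_one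
  simp only [ψ, d, zero_smul, add_zero, one_smul, zero_mul, sub_zero, one_pow, mul_one,
    add_sub_cancel, ne_eq, OfNat.ofNat_ne_zero, not_false_eq_true, zero_pow, mul_zero] at h01
  linarith

theorem add_inner_add_sq_norm_sub_le_of_lipschitz_gradient (hgrad : ∀ x, HasGradientAt f (g x) x)
    (hconv : ∀ x y, 0 ≤ f x - f y - ⟪g y, x - y⟫) (hL : 0 < L)
    (hsmooth : ∀ x y, ‖g x - g y‖ ≤ L * ‖x - y‖) (x y : E) :
    f x + ⟪g x, y - x⟫ + 1 / (2 * L) * ‖g x - g y‖ ^ 2 ≤ f y := by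
  set d := g y - g x
  -- the smoothness bound at `y` and the convexity bound at `x`, both evaluated at `y - L⁻¹ • d`
  have hdesc := le_add_inner_add_sq_of_lipschitz_gradient hgrad hsmooth y (y - L⁻¹ • d)
  have hsupp := hconv (y - L⁻¹ • d) x
  rw [sub_sub_cancel_left, norm_neg, norm_smul, Real.norm_of_nonneg (inv_nonneg.mpr hL.le),
    inner_neg_right, real_inner_smul_right] at hdesc
  rw [sub_right_comm y, inner_sub_right, real_inner_smul_right] at hsupp
  have hd : ⟪g y, d⟫ - ⟪g x, d⟫ = ‖g x - g y‖ ^ 2 := by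
    rw [← inner_sub_left, real_inner_self_eq_norm_sq, norm_sub_rev]
  have hL' : L / 2 * (L⁻¹ * ‖d‖) ^ 2 = 1 / (2 * L) * ‖g x - g y‖ ^ 2 := by
    rw [norm_sub_rev]; field_simp
  linear_combination hdesc + hsupp - L⁻¹ * hd + hL'

theorem add_inner_add_quarter_mul_sq_norm_sub_le (hgrad : ∀ x, HasGradientAt f (g x) x)
    (hconv : ∀ x y, 0 ≤ f x - f y - ⟪g y, x - y⟫) (hL : 0 < L)
    (hsmooth : ∀ x y, ‖g x - g y‖ ≤ L * ‖x - y‖) {s : ℝ} (hsL : s ≤ 2 / L) (x y : E) :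
    f x + ⟪g x, y - x⟫ + s / 4 * ‖g x - g y‖ ^ 2 ≤ f y := by
  have hs : s / 4 ≤ 1 / (2 * L) := calc
    s / 4 ≤ 2 / L / 4 := by gcongr
    _ = 1 / (2 * L) := by ring
  have := add_inner_add_sq_norm_sub_le_of_lipschitz_gradient hgrad hconv hL hsmooth x y
  have := mul_le_mul_of_nonneg_right hs (sq_nonneg ‖g x - g y‖)
  linarith

end Gradient

noncomputable def lyapunovCoeff (θ θ' : ℝ) : ℝ := θ' / (θ' ^ 2 - θ ^ 2)

theorem lyapunovCoeff_half {n : ℝ} (hn : 0 ≤ n) :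
    lyapunovCoeff (n / 2) ((n + 1) / 2) = 2 * (n + 1) / (2 * n + 1) := by
  rw [lyapunovCoeff, div_eq_div_iff (by nlinarith) (by positivity)]
  ring

theorem one_le_lyapunovCoeff_half {n : ℝ} (hn : 0 ≤ n) :
    1 ≤ lyapunovCoeff (n / 2) ((n + 1) / 2) := by
  rw [lyapunovCoeff_half hn, one_le_div (by positivity)]
  linarith

theorem lyapunovCoeff_half_succ_mul_sq_le {n : ℝ} (hn : 0 ≤ n) :
    lyapunovCoeff ((n + 1) / 2) ((n + 1 + 1) / 2) * ((n + 1) / 2) ^ 2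
      ≤ lyapunovCoeff (n / 2) ((n + 1) / 2) * (n / 2) ^ 2 + (n + 1) / 2 := by
  have hgap : lyapunovCoeff (n / 2) ((n + 1) / 2) * (n / 2) ^ 2 + (n + 1) / 2
      - lyapunovCoeff ((n + 1) / 2) ((n + 1 + 1) / 2) * ((n + 1) / 2) ^ 2
      = (n + 1) ^ 2 / (8 * n ^ 2 + 16 * n + 6) := by
    rw [lyapunovCoeff_half hn, lyapunovCoeff_half (by positivity)]
    field_simp
    ring
  have hgap_nonneg : 0 ≤ (n + 1) ^ 2 / (8 * n ^ 2 + 16 * n + 6) := by positivity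
  linarith

section Lyapunov

variable {E : Type*} [NormedAddCommGroup E] [InnerProductSpace ℝ E]

theorem smul_sub_eq_of_eq_smul_add_one_sub_smul {θ θ' : ℝ} (hθ' : θ' ≠ 0)
    (hθθ' : θ' ^ 2 - θ ^ 2 ≠ 0) {x v z p : E}
    (hx : x = (θ ^ 2 / θ' ^ 2) • v + (1 - θ ^ 2 / θ' ^ 2) • z) :
    θ' • (z - p) = θ' • (x - p) + (lyapunovCoeff θ θ' * θ ^ 2) • (x - v) := by
  subst hx
  rw [lyapunovCoeff]
  match_scalars <;> field_simp <;> ring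

theorem lyapunov_step {f : E → ℝ} {g : E → E} {s θ θ' c c' : ℝ} {X x₀ x₁ z₁ : E}
    (hcoco : ∀ x y, f x + ⟪g x, y - x⟫ + s / 4 * ‖g x - g y‖ ^ 2 ≤ f y)
    (hgX : g X = 0) (hs : 0 < s) (hθ' : 0 ≤ θ') (hc : 0 ≤ c) (hc' : 1 ≤ c')
    (hcc : c' * θ' ^ 2 ≤ c * θ ^ 2 + θ')
    (hupd : θ' • (z₁ - X) = θ' • (x₁ - X) + (c * θ ^ 2) • (x₁ - (x₀ - (s / 2) • g x₀))) :
    2 * c' * θ' ^ 2 * (f x₁ - f X - s / 4 * ‖g x₁‖ ^ 2)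
        + 1 / s * ‖z₁ - (s * θ') • g x₁ - X‖ ^ 2
      ≤ 2 * c * θ ^ 2 * (f x₀ - f X - s / 4 * ‖g x₀‖ ^ 2) + 1 / s * ‖z₁ - X‖ ^ 2 := by
  have hz : 1 / s * ‖z₁ - (s * θ') • g x₁ - X‖ ^ 2
      = 1 / s * ‖z₁ - X‖ ^ 2 - 2 * θ' * ⟪g x₁, z₁ - X⟫ + s * θ' ^ 2 * ‖g x₁‖ ^ 2 := by
    rw [sub_right_comm, norm_sub_sq_real, real_inner_smul_right, real_inner_comm, norm_smul,
      Real.norm_eq_abs, mul_pow, sq_abs]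
    field_simp
  have hW : θ' * ⟪g x₁, z₁ - X⟫ = θ' * ⟪g x₁, x₁ - X⟫
      + c * θ ^ 2 * (⟪g x₁, x₁ - x₀⟫ + s / 2 * ⟪g x₁, g x₀⟫) := by
    have := congrArg (⟪g x₁, ·⟫) hupd
    simp only [inner_add_right, inner_sub_right, real_inner_smul_right] at this ⊢
    linear_combination this
  have hmin := hcoco X x₁
  have hopt := hcoco x₁ X
  have hprev := hcoco x₁ x₀
  rw [hgX, inner_zero_left, zero_sub, norm_neg] at hmin
  rw [hgX, sub_zero, ← neg_sub x₁, inner_neg_right] at hopt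
  rw [norm_sub_sq_real, ← neg_sub x₁, inner_neg_right] at hprev
  have hopt' := mul_le_mul_of_nonneg_left hopt (by positivity : 0 ≤ 2 * θ')
  have hprev' := mul_le_mul_of_nonneg_left hprev (by positivity : 0 ≤ 2 * c * θ ^ 2)
  have hc'_sub : 0 ≤ c' - 1 := by linarith
  have hcc_sub : 0 ≤ c * θ ^ 2 + θ' - c' * θ' ^ 2 := by linarith
  have hmin' := mul_le_mul_of_nonneg_left hmin hcc_sub
  have hgrad_c' : 0 ≤ s * θ' ^ 2 * (c' - 1) * ‖g x₁‖ ^ 2 := by positivity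
  have hgrad_cc : 0 ≤ s * (c * θ ^ 2 + θ' - c' * θ' ^ 2) * ‖g x₁‖ ^ 2 := by positivity
  rw [hz]
  linarith

end Lyapunov

theorem symplectic_euler_agm_lyapunov
    {E : Type*} [NormedAddCommGroup E] [InnerProductSpace ℝ E] [CompleteSpace E]
    (f : E → ℝ) (g : E → E)
    (hgrad : ∀ x, HasGradientAt f (g x) x)
    (hconv : ∀ x y, 0 ≤ f x - f y - ⟪g y, x - y⟫)
    (L : ℝ) (hL : 0 < L)
    (hsmooth : ∀ x y, ‖g x - g y‖ ≤ L * ‖x - y‖)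
    (Xs : E) (hmin : ∀ x, f Xs ≤ f x)
    (s : ℝ) (hs0 : 0 < s) (hsL : s ≤ 2 / L)
    (x z : ℕ → E)
    (hz : ∀ k : ℕ, z (k + 1) = z k - (s * ((k : ℝ) / 2)) • g (x k))
    (hx : ∀ k : ℕ, x (k + 1) =
      (((k : ℝ) / 2) ^ 2 / (((k : ℝ) + 1) / 2) ^ 2) • (x k - (s / 2) • g (x k))
        + (1 - ((k : ℝ) / 2) ^ 2 / (((k : ℝ) + 1) / 2) ^ 2) • z (k + 1))
    (c : ℕ → ℝ)
    (hc : ∀ k : ℕ,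
      c k = (((k : ℝ) + 1) / 2) / ((((k : ℝ) + 1) / 2) ^ 2 - ((k : ℝ) / 2) ^ 2))
    (Φ : ℕ → ℝ)
    (hΦ : ∀ k : ℕ,
      Φ k = 2 * c k * ((k : ℝ) / 2) ^ 2
              * (f (x k) - f Xs - (s / 4) * ‖g (x k)‖ ^ 2)
            + (1 / s) * ‖z (k + 1) - Xs‖ ^ 2) :
    ∀ k : ℕ, Φ (k + 1) ≤ Φ k := by
  intro k
  have hn : (0 : ℝ) ≤ k := k.cast_nonneg
  have hgXs : g Xs = 0 := IsLocalMin.hasGradientAt_eq_zero (Eventually.of_forall hmin) (hgrad Xs)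
  have hck : c k = lyapunovCoeff ((k : ℝ) / 2) (((k : ℝ) + 1) / 2) := hc k
  have hck₁ : c (k + 1) = lyapunovCoeff (((k : ℝ) + 1) / 2) (((k : ℝ) + 1 + 1) / 2) := by
    rw [hc]; push_cast; rfl
  have hupd := smul_sub_eq_of_eq_smul_add_one_sub_smul (p := Xs) (by positivity)
    (by ring_nf; positivity) (hx k)
  rw [hΦ, hΦ, hz (k + 1), hck, hck₁]
  push_cast
  exact lyapunov_step
    (add_inner_add_quarter_mul_sq_norm_sub_le hgrad hconv hL hsmooth hsL) hgXs hs0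
    (by positivity) (by linarith [one_le_lyapunovCoeff_half hn])
    (one_le_lyapunovCoeff_half (by positivity)) (lyapunovCoeff_half_succ_mul_sq_le hn) hupd
end
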